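/- arXiv:2303.01969 — 2 statements merged into one kernel-verified Lean document; each statement's English description precedes it below -/
import Mathlib

section
/- Let X and Y be 1-uniformly discrete metric spaces with bounded geometry, and suppose asdim_se(X) ≤ d. Suppose there is a regular map f : Y → X, a constant C, and a point a ∈ Y such that d_X(f(a), f(b)) ≤ C·log(1 + d_Y(a, b)) + C for all b ∈ Y. Then for every r > 0 there is a decomposition Y = Y₀ ∪ … ∪ Y_d in which each Y_i is a disjoint union of subsets ('pieces') any two of which are at distance ≥ r, such that the collection 𝒰 of all pieces is radially sublinear with respect to a: lim_{m→∞} (1/m) · sup{diam(U) : U ∈ 𝒰, d(a, U) ≤ m} = 0. -/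
open Metric Set

/-- A metric space is 1-uniformly discrete. -/
def UnifDiscrete (X : Type*) [MetricSpace X] : Prop :=
  ∀ x y : X, x ≠ y → 1 ≤ dist x y

/-- Bounded geometry: balls of each radius have uniformly bounded cardinality. -/
def BddGeom (X : Type*) [MetricSpace X] : Prop :=
  ∀ R : ℝ, ∃ N : ℕ, ∀ (x : X) (s : Finset X), ↑s ⊆ Metric.closedBall x R → s.card ≤ N

/-- A regular map between metric spaces. -/
def IsRegularMap {X Y : Type*} [MetricSpace X] [MetricSpace Y] (f : X → Y) : Prop :=
  ∃ κ : ℕ, 1 ≤ κ ∧ (∀ x x' : X, dist (f x) (f x') ≤ κ * (1 + dist x x')) ∧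
    ∀ y : Y, ∃ c : Finset X, c.card ≤ κ ∧ f ⁻¹' Metric.ball y 1 ⊆ ⋃ x ∈ c, Metric.ball x 1

/-- A quasi-isometric embedding. -/
def IsQIEmbedding {X Y : Type*} [MetricSpace X] [MetricSpace Y] (f : X → Y) : Prop :=
  ∃ L D : ℝ, 1 ≤ L ∧ 0 ≤ D ∧ ∀ x x' : X,
    L⁻¹ * dist x x' - D ≤ dist (f x) (f x') ∧ dist (f x) (f x') ≤ L * dist x x' + D

/-- A coarse Lipschitz map. -/
def CoarseLipschitz {X Y : Type*} [MetricSpace X] [MetricSpace Y] (f : X → Y) : Prop :=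
  ∃ K : ℝ, 1 ≤ K ∧ ∀ x x' : X, dist (f x) (f x') ≤ K * dist x x' + K

/-- The metric of `T` is the graph metric of a 3-regular tree. -/
def IsCubicTreeMetric (T : Type*) [MetricSpace T] : Prop :=
  ∃ G : SimpleGraph T, G.Connected ∧ G.IsAcyclic ∧
    (∀ v : T, (G.neighborSet v).ncard = 3) ∧
    ∀ u v : T, dist u v = (G.dist u v : ℝ)

/-- The metric of `Z` is the graph metric of a connected graph of uniformly bounded degree. -/
def IsBddDegGraphMetric (Z : Type*) [MetricSpace Z] : Prop :=
  ∃ G : SimpleGraph Z, G.Connected ∧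
    (∃ D : ℕ, ∀ v : Z, (G.neighborSet v).ncard ≤ D) ∧
    ∀ u v : Z, dist u v = (G.dist u v : ℝ)

/-- A non-decreasing subexponential function `[0,∞) → [0,∞)`. -/
def SubexpFun (g : ℝ → ℝ) : Prop :=
  MonotoneOn g (Set.Ici 0) ∧ (∀ r : ℝ, 0 ≤ g r) ∧
    Filter.Tendsto (fun r => Real.log (g r) / r) Filter.atTop (nhds 0)

/-- Every ball of radius `r` in `Z` contains at most `g r` points. -/
def HasGrowthBound (Z : Type*) [MetricSpace Z] (g : ℝ → ℝ) : Prop :=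
  ∀ (z : Z) (r : ℝ), 0 ≤ r → ∀ s : Finset Z, ↑s ⊆ Metric.closedBall z r → (s.card : ℝ) ≤ g r

def HasSubexpGrowth (Z : Type*) [MetricSpace Z] : Prop :=
  ∃ g : ℝ → ℝ, SubexpFun g ∧ HasGrowthBound Z g

def HasPolyGrowth (Z : Type*) [MetricSpace Z] : Prop :=
  ∃ (C : ℝ) (d : ℕ), 1 ≤ C ∧ HasGrowthBound Z (fun r => C * r ^ d + C)

/-- Distinct members of the family are at distance at least `r` from each other. -/
def SepFamily {X : Type*} [MetricSpace X] (r : ℝ) (𝒰 : Set (Set X)) : Prop :=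
  ∀ U ∈ 𝒰, ∀ V ∈ 𝒰, U ≠ V → ∀ x ∈ U, ∀ y ∈ V, r ≤ dist x y

/-- A decomposition of `X` into `n+1` colours of `r`-separated pieces. -/
def Decomp {X : Type*} [MetricSpace X] (n : ℕ) (r : ℝ) (𝒰 : Fin (n+1) → Set (Set X)) : Prop :=
  (∀ x : X, ∃ i, ∃ U ∈ 𝒰 i, x ∈ U) ∧ ∀ i, SepFamily r (𝒰 i)

/-- A collection of subsets of `X` has growth uniformly controlled by the family `F`. -/
def FGrowing {X : Type*} [MetricSpace X] (F : Set (ℝ → ℝ)) (𝒰 : Set (Set X)) : Prop :=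
  ∃ f ∈ F, ∃ C : ℝ, 1 ≤ C ∧ ∀ U ∈ 𝒰, ∀ (x : X) (r : ℝ), 0 ≤ r →
    ∀ s : Finset X, ↑s ⊆ U ∩ Metric.closedBall x r → (s.card : ℝ) ≤ C * f (C * r) + C

/-- `asdim_F X ≤ n`. -/
def AsdimLE (F : Set (ℝ → ℝ)) (X : Type*) [MetricSpace X] (n : ℕ) : Prop :=
  ∀ r : ℝ, 0 < r → ∃ 𝒰 : Fin (n+1) → Set (Set X),
    Decomp n r 𝒰 ∧ FGrowing F (⋃ i, 𝒰 i)

/-- Iterated neighbourhoods `N^m_s(Y)` of `Y` with respect to the collection `𝒴`. -/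
def iterNbhd {X : Type*} [MetricSpace X] (𝒴 : Set (Set X)) (s : ℝ) : ℕ → Set X → Set X
  | 0, Y => Y
  | m + 1, Y => ⋃₀ {Y' | Y' ∈ 𝒴 ∧ ∃ x ∈ Y', ∃ z ∈ iterNbhd 𝒴 s m Y, dist x z ≤ s}

/-- `ov-asdim_F X ≤ n`. -/
def OvAsdimLE (F : Set (ℝ → ℝ)) (X : Type*) [MetricSpace X] (n : ℕ) : Prop :=
  ∀ r : ℝ, 0 < r → ∃ 𝒰 : Fin (n+1) → Set (Set X),
    Decomp n r 𝒰 ∧ ∀ s : ℝ, 1 ≤ s → ∀ m : ℕ,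
      FGrowing F ((iterNbhd (⋃ i, 𝒰 i) s m) '' (⋃ i, 𝒰 i))

/-- A family of non-decreasing functions `[0,∞) → [0,∞)`. -/
def NondecrFamily (F : Set (ℝ → ℝ)) : Prop :=
  ∀ f ∈ F, MonotoneOn f (Set.Ici 0) ∧ ∀ r : ℝ, 0 ≤ r → 0 ≤ f r

/-- The family of non-decreasing subexponential functions. -/
def seFamily : Set (ℝ → ℝ) := {g | SubexpFun g}

/-- The family of non-decreasing functions bounded by `C·r^d + C`. -/
def polyFamily (d : ℕ) : Set (ℝ → ℝ) :=
  {f | MonotoneOn f (Set.Ici 0) ∧ (∀ r : ℝ, 0 ≤ f r) ∧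
    ∃ C : ℝ, 0 < C ∧ ∀ r : ℝ, 0 ≤ r → f r ≤ C * r ^ d + C}

/-- `asdim X ≤ n` : classical asymptotic dimension. -/
def ClassicalAsdimLE (X : Type*) [MetricSpace X] (n : ℕ) : Prop :=
  ∀ r : ℝ, 0 < r → ∃ 𝒰 : Fin (n+1) → Set (Set X), Decomp n r 𝒰 ∧
    ∃ B : ℝ, ∀ U ∈ ⋃ i, 𝒰 i, ∀ x ∈ U, ∀ y ∈ U, dist x y ≤ B

/-!
Pull back an `se`-growing decomposition of `X` at scale `κ(1 + r)` along `f` and split each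
preimage of a piece into its `r`-chain components; regularity of `f` makes components coming from
different pieces `r`-separated. A component that meets the ball `B(a, m)` in `u` and reaches
distance `εm` from `u` meets each of the `≈ εm / r` annuli of width `r` about `u`, so it has
`≳ εm / r` points in `B(a, (1 + ε) m)`. But `f` maps these points, at most `κ` to one, into one piece
intersected with a ball of radius `O(log m)` about `f a`, which by subexponential growth has
`O(√m)` points.
-/

open Asymptotics Filter

section ChainComponents

variable {Y : Type*} [MetricSpace Y]

def chainStep (r : ℝ) (S : Set Y) (p q : Y) : Prop :=
  p ∈ S ∧ q ∈ S ∧ dist p q ≤ r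

instance (r : ℝ) (S : Set Y) : Std.Symm (chainStep r S) where
  symm _ _ := fun ⟨hp, hq, hpq⟩ => ⟨hq, hp, by rwa [dist_comm]⟩

def chainComp (r : ℝ) (S : Set Y) (u : Y) : Set Y :=
  {z | Relation.ReflTransGen (chainStep r S) u z}

variable {r : ℝ} {S : Set Y} {u u' x y z : Y}

lemma chainComp_subset (hu : u ∈ S) : chainComp r S u ⊆ S := by
  intro z hz
  induction hz with
  | refl => exact hu
  | tail _ hstep _ => exact hstep.2.1

lemma chainComp_eq_of_mem (hz : z ∈ chainComp r S u) : chainComp r S z = chainComp r S u := by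
  ext w
  exact ⟨hz.trans, (symm hz : Relation.ReflTransGen _ z u).trans⟩

lemma chainComp_eq_of_dist_le (hu : u ∈ S) (hu' : u' ∈ S) (hx : x ∈ chainComp r S u)
    (hy : y ∈ chainComp r S u') (hxy : dist x y ≤ r) : chainComp r S u = chainComp r S u' := by
  have hstep : y ∈ chainComp r S x :=
    Relation.ReflTransGen.single ⟨chainComp_subset hu hx, chainComp_subset hu' hy, hxy⟩
  rw [← chainComp_eq_of_mem hx, ← chainComp_eq_of_mem hy, chainComp_eq_of_mem hstep]

lemma exists_mem_chainComp_dist_mem_Ioc (hz : z ∈ chainComp r S u) {B : ℝ} (hB : 0 ≤ B)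
    (hBz : B < dist u z) : ∃ w ∈ chainComp r S u, B < dist u w ∧ dist u w ≤ B + r := by
  induction hz with
  | refl => simp at hBz; linarith
  | @tail b c hb hbc ih =>
    by_cases hub : B < dist u b
    · exact ih hub
    · exact ⟨c, hb.tail hbc, hBz, (dist_triangle u b c).trans (add_le_add (not_lt.1 hub) hbc.2.2)⟩

lemma exists_finset_chainComp_inter_closedBall (hr : 0 < r) (hz : z ∈ chainComp r S u) {k : ℕ}
    (hk : k * r < dist u z) :
    ∃ t : Finset Y, ↑t ⊆ chainComp r S u ∩ closedBall u (k * r) ∧ k ≤ t.card := by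
  have hannulus : ∀ j : ℕ, j < k →
      ∃ w ∈ chainComp r S u, j * r < dist u w ∧ dist u w ≤ j * r + r := fun j hj =>
    exists_mem_chainComp_dist_mem_Ioc hz (by positivity) (lt_of_le_of_lt (by gcongr) hk)
  have : Nonempty Y := ⟨u⟩
  choose! w hw hdist using hannulus
  classical
  refine ⟨(Finset.range k).image w, ?_, ?_⟩
  · intro p hp
    obtain ⟨j, hj, rfl⟩ := by simpa using hp
    refine ⟨hw j hj, ?_⟩
    rw [mem_closedBall, dist_comm]
    calc dist u (w j) ≤ (j + 1) * r := by linarith [(hdist j hj).2]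
      _ ≤ k * r := by gcongr; exact_mod_cast hj
  · rw [Finset.card_image_of_injOn, Finset.card_range]
    intro i hi j hj hij
    rw [Finset.coe_range, mem_Iio] at hi hj
    have hi' := hdist i hi
    have hj' := hdist j hj
    rw [hij] at hi'
    have hij' : (i : ℝ) * r < (j + 1) * r := by linarith
    have hji' : (j : ℝ) * r < (i + 1) * r := by linarith
    have h1 : (i : ℝ) < j + 1 := lt_of_mul_lt_mul_right hij' hr.le
    have h2 : (j : ℝ) < i + 1 := lt_of_mul_lt_mul_right hji' hr.le
    norm_cast at h1 h2
    omega

end ChainComponents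

section Subexponential

lemma SubexpFun.exists_le_add_exp {g : ℝ → ℝ} (hg : SubexpFun g) {δ : ℝ} (hδ : 0 < δ) :
    ∃ K : ℝ, ∀ s, 0 ≤ s → g s ≤ K + Real.exp (δ * s) := by
  obtain ⟨s₀, hs₀⟩ := eventually_atTop.1
    ((hg.2.2.eventually (gt_mem_nhds hδ)).and (eventually_gt_atTop 0))
  refine ⟨g (max s₀ 0), fun s hs => ?_⟩
  rcases le_or_gt s (max s₀ 0) with hle | hlt
  · linarith [hg.1 hs (le_max_right s₀ 0) hle, Real.exp_pos (δ * s)]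
  · obtain ⟨hlog, hspos⟩ := hs₀ s (le_of_max_le_left hlt.le)
    calc g s ≤ Real.exp (Real.log (g s)) := Real.le_exp_log _
      _ ≤ Real.exp (δ * s) := by gcongr; exact ((div_lt_iff₀ hspos).1 hlog).le
      _ ≤ g (max s₀ 0) + Real.exp (δ * s) := le_add_of_nonneg_left (hg.2.1 _)

lemma isLittleO_sqrt_mul_one_add_id (b : ℝ) :
    (fun ρ : ℝ => √(b * (1 + ρ))) =o[atTop] id := by
  have hlin : (fun ρ : ℝ => b * (1 + ρ)) =o[atTop] fun ρ => ρ ^ 2 := by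
    simpa [mul_add] using ((isLittleO_pow_pow_atTop_of_lt (𝕜 := ℝ) two_pos).add
      (isLittleO_pow_pow_atTop_of_lt (𝕜 := ℝ) one_lt_two)).const_mul_left b
  have := hlin.sqrt (Eventually.of_forall fun ρ => sq_nonneg ρ)
  simp only [Real.sqrt_sq_eq_abs] at this
  exact isLittleO_abs_right.1 this

lemma SubexpFun.isLittleO_comp_log {g : ℝ → ℝ} (hg : SubexpFun g) {c : ℝ} (hc : 0 ≤ c) :
    (fun ρ => g (c * Real.log (1 + ρ) + c)) =o[atTop] id := by
  obtain ⟨K, hK⟩ := hg.exists_le_add_exp (δ := 1 / (2 * (c + 1))) (by positivity)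
  have hbound : ∀ ρ, 0 ≤ ρ → g (c * Real.log (1 + ρ) + c) ≤ K + √(Real.exp 1 * (1 + ρ)) := by
    intro ρ hρ
    have hL : 0 ≤ Real.log (1 + ρ) := Real.log_nonneg (by linarith)
    have hexp : 1 / (2 * (c + 1)) * (c * Real.log (1 + ρ) + c) ≤ (1 + Real.log (1 + ρ)) / 2 := by
      rw [div_mul_eq_mul_div, one_mul, div_le_div_iff₀ (by positivity) two_pos]
      nlinarith
    calc g (c * Real.log (1 + ρ) + c)
        ≤ K + Real.exp (1 / (2 * (c + 1)) * (c * Real.log (1 + ρ) + c)) := hK _ (by positivity)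
      _ ≤ K + Real.exp ((1 + Real.log (1 + ρ)) / 2) := by gcongr
      _ = K + √(Real.exp 1 * (1 + ρ)) := by
        rw [Real.exp_half, Real.exp_add, Real.exp_log (by linarith)]
  refine IsBigO.trans_isLittleO (IsBigO.of_bound 1 ?_)
    ((isLittleO_const_id_atTop K).add (isLittleO_sqrt_mul_one_add_id (Real.exp 1)))
  filter_upwards [eventually_ge_atTop 0] with ρ hρ
  rw [one_mul, Real.norm_of_nonneg (hg.2.1 _)]
  exact (hbound ρ hρ).trans (Real.le_norm_self _)

end Subexponential

section Pullback

variable {X Y : Type*} [MetricSpace X] [MetricSpace Y] {f : Y → X}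

lemma UnifDiscrete.eq_of_dist_lt_one (hY : UnifDiscrete Y) {y y' : Y} (h : dist y y' < 1) :
    y = y' := by
  by_contra hne
  exact (hY y y' hne).not_gt h

lemma UnifDiscrete.card_le_mul_card_image [DecidableEq X] (hY : UnifDiscrete Y) {κ : ℕ}
    (hfib : ∀ x : X, ∃ c : Finset Y, c.card ≤ κ ∧ f ⁻¹' ball x 1 ⊆ ⋃ y ∈ c, ball y 1)
    (t : Finset Y) : t.card ≤ κ * (t.image f).card := by
  refine Finset.card_le_mul_card_image t κ fun x _ => ?_
  obtain ⟨c, hcκ, hcover⟩ := hfib x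
  refine le_trans (Finset.card_le_card fun p hp => ?_) hcκ
  have hpx : p ∈ f ⁻¹' ball x 1 := by simp [(Finset.mem_filter.1 hp).2]
  obtain ⟨y, hy, hpy⟩ := mem_iUnion₂.1 (hcover hpx)
  rwa [hY.eq_of_dist_lt_one (mem_ball.1 hpy)]

lemma UnifDiscrete.card_le_of_subset_preimage_inter_closedBall (hY : UnifDiscrete Y) {κ : ℕ}
    (hfib : ∀ x : X, ∃ c : Finset Y, c.card ≤ κ ∧ f ⁻¹' ball x 1 ⊆ ⋃ y ∈ c, ball y 1)
    {a : Y} {C : ℝ} (hdist : ∀ b : Y, dist (f a) (f b) ≤ C * Real.log (1 + dist a b) + C)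
    {U : Set X} {G : ℝ → ℝ}
    (hU : ∀ R, 0 ≤ R → ∀ s : Finset X, ↑s ⊆ U ∩ closedBall (f a) R → (s.card : ℝ) ≤ G R)
    {ρ : ℝ} (hρ : 0 ≤ ρ) {t : Finset Y} (ht : ↑t ⊆ f ⁻¹' U ∩ closedBall a ρ) :
    (t.card : ℝ) ≤ κ * G (C * Real.log (1 + ρ) + C) := by
  classical
  have hC : 0 ≤ C := by simpa using hdist a
  have hL : 0 ≤ Real.log (1 + ρ) := Real.log_nonneg (by linarith)
  have himage : ↑(t.image f) ⊆ U ∩ closedBall (f a) (C * Real.log (1 + ρ) + C) := by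
    intro x hx
    obtain ⟨p, hp, rfl⟩ := by simpa using hx
    obtain ⟨hpU, hpa⟩ := ht hp
    refine ⟨hpU, ?_⟩
    rw [mem_closedBall, dist_comm]
    rw [mem_closedBall, dist_comm] at hpa
    calc dist (f a) (f p) ≤ C * Real.log (1 + dist a p) + C := hdist p
      _ ≤ C * Real.log (1 + ρ) + C := by gcongr
  calc (t.card : ℝ) ≤ κ * (t.image f).card := by
        exact_mod_cast hY.card_le_mul_card_image hfib t
    _ ≤ κ * G (C * Real.log (1 + ρ) + C) := by
        gcongr
        exact hU _ (by positivity) _ himage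

def chainPieces {n : ℕ} (f : Y → X) (r : ℝ) (𝒱 : Fin (n + 1) → Set (Set X)) :
    Fin (n + 1) → Set (Set Y) :=
  fun i => {W | ∃ U ∈ 𝒱 i, ∃ u, f u ∈ U ∧ W = chainComp r (f ⁻¹' U) u}

lemma Decomp.chainPieces {n : ℕ} {r κ : ℝ} {𝒱 : Fin (n + 1) → Set (Set X)}
    (h𝒱 : Decomp n (κ * (1 + r)) 𝒱) (hκ : 0 < κ)
    (hf : ∀ y y' : Y, dist (f y) (f y') ≤ κ * (1 + dist y y')) :
    Decomp n r (chainPieces f r 𝒱) := by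
  refine ⟨fun y => ?_, fun i => ?_⟩
  · obtain ⟨i, U, hU, hyU⟩ := h𝒱.1 (f y)
    exact ⟨i, _, ⟨U, hU, y, hyU, rfl⟩, Relation.ReflTransGen.refl⟩
  · rintro _ ⟨U, hU, u, hu, rfl⟩ _ ⟨U', hU', u', hu', rfl⟩ hne x hx y hy
    by_contra! hlt
    by_cases hUU' : U = U'
    · subst hUU'
      exact hne (chainComp_eq_of_dist_le hu hu' hx hy hlt.le)
    · have hsep := h𝒱.2 i U hU U' hU' hUU' (f x)
        (chainComp_subset (S := f ⁻¹' U) hu hx) (f y) (chainComp_subset (S := f ⁻¹' U') hu' hy)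
      have : κ * (1 + dist x y) < κ * (1 + r) := by gcongr
      linarith [hf x y]

end Pullback

section RadialSublinearity

variable {Y : Type*} [MetricSpace Y]

/-- `sup {diam W | W ∈ 𝒲, d(a, W) ≤ m} = o(m)` as `m → ∞`. -/
def RadiallySublinear (a : Y) (𝒲 : Set (Set Y)) : Prop :=
  ∀ ε : ℝ, 0 < ε → ∃ M : ℝ, ∀ m : ℝ, M ≤ m → ∀ W ∈ 𝒲, (∃ u ∈ W, dist a u ≤ m) →
    ∀ x ∈ W, ∀ y ∈ W, dist x y ≤ ε * m

variable {r : ℝ} {S : Set Y} {a u x : Y} {h : ℝ → ℝ}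

lemma natCast_le_of_mul_lt_dist (hr : 0 < r)
    (hcount : ∀ ρ, 0 ≤ ρ → ∀ t : Finset Y, ↑t ⊆ chainComp r S u ∩ closedBall a ρ →
      (t.card : ℝ) ≤ h ρ)
    (hx : x ∈ chainComp r S u) {k : ℕ} (hk : k * r < dist u x) {ρ : ℝ}
    (hρ : dist a u + k * r ≤ ρ) : (k : ℝ) ≤ h ρ := by
  obtain ⟨t, ht, hkt⟩ := exists_finset_chainComp_inter_closedBall hr hx hk
  have hsub : ↑t ⊆ chainComp r S u ∩ closedBall a ρ := fun p hp =>
    ⟨(ht hp).1, by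
      have hpu := mem_closedBall.1 (ht hp).2
      rw [mem_closedBall]
      linarith [dist_triangle p u a, dist_comm u a]⟩
  exact (Nat.cast_le.2 hkt).trans (hcount ρ (le_trans (by positivity) hρ) t hsub)

lemma radiallySublinear_of_isLittleO (hr : 0 < r) {𝒲 : Set (Set Y)}
    (h𝒲 : ∀ W ∈ 𝒲, ∃ S u, W = chainComp r S u) (hh : h =o[atTop] id)
    (hcount : ∀ W ∈ 𝒲, ∀ ρ, 0 ≤ ρ → ∀ t : Finset Y, ↑t ⊆ W ∩ closedBall a ρ →
      (t.card : ℝ) ≤ h ρ) :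
    RadiallySublinear a 𝒲 := by
  intro ε hε
  have hq : 0 < 1 + ε / 2 := by positivity
  have hc : 0 < ε / (4 * r * (1 + ε / 2)) := by positivity
  obtain ⟨M, hM⟩ := eventually_atTop.1
    (((tendsto_id.const_mul_atTop hq).eventually (hh.bound hc)).and
      (eventually_gt_atTop (4 * r / ε)))
  refine ⟨M, fun m hm W hW ⟨u, hu, hum⟩ => ?_⟩
  obtain ⟨hbound, hmlarge⟩ := hM m hm
  rw [div_lt_iff₀ hε] at hmlarge
  have hm0 : 0 < m := by nlinarith
  have hhqm : h ((1 + ε / 2) * m) * r ≤ ε * m / 4 := by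
    simp only [id_eq, Real.norm_of_nonneg (by positivity : 0 ≤ (1 + ε / 2) * m)] at hbound
    calc h ((1 + ε / 2) * m) * r ≤ ε / (4 * r * (1 + ε / 2)) * ((1 + ε / 2) * m) * r := by
          gcongr; exact (Real.le_norm_self _).trans hbound
      _ = ε * m / 4 := by field_simp
  obtain ⟨S, u₀, rfl⟩ := h𝒲 W hW
  have hcountW := hcount _ hW
  rw [← chainComp_eq_of_mem hu] at hcountW ⊢
  have hnear : ∀ z ∈ chainComp r S u, dist u z ≤ ε * m / 2 := by
    intro z hz
    by_contra! hfar
    set k := ⌊ε * m / (2 * r)⌋₊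
    have hkr : k * r ≤ ε * m / 2 := by
      have := Nat.floor_le (by positivity : 0 ≤ ε * m / (2 * r))
      rw [le_div_iff₀ (by positivity)] at this
      linarith
    have hk1 : ε * m / 2 < (k + 1) * r := by
      have := Nat.lt_floor_add_one (ε * m / (2 * r))
      rw [div_lt_iff₀ (by positivity)] at this
      linarith
    have hk := natCast_le_of_mul_lt_dist hr hcountW hz (hkr.trans_lt hfar)
      (ρ := (1 + ε / 2) * m) (by linarith)
    have : (k : ℝ) * r ≤ ε * m / 4 := (mul_le_mul_of_nonneg_right hk hr.le).trans hhqm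
    linarith
  intro x hx y hy
  calc dist x y ≤ dist u x + dist u y := dist_triangle_left x y u
    _ ≤ ε * m / 2 + ε * m / 2 := add_le_add (hnear x hx) (hnear y hy)
    _ = ε * m := by ring

end RadialSublinearity

theorem radially_sublinear_decomposition_of_exp_distorted_general
    (X Y : Type*) [MetricSpace X] [MetricSpace Y]
    (hY : UnifDiscrete Y)
    (d : ℕ) (hdim : AsdimLE seFamily X d)
    (f : Y → X) (hf : IsRegularMap f) (C : ℝ) (a : Y)
    (hdist : ∀ b : Y, dist (f a) (f b) ≤ C * Real.log (1 + dist a b) + C) :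
    ∀ r : ℝ, 0 < r → ∃ 𝒰 : Fin (d + 1) → Set (Set Y), Decomp d r 𝒰 ∧
      ∀ ε : ℝ, 0 < ε → ∃ M : ℝ, ∀ m : ℝ, M ≤ m →
        ∀ U ∈ ⋃ i, 𝒰 i, (∃ u ∈ U, dist a u ≤ m) →
          ∀ x ∈ U, ∀ y ∈ U, dist x y ≤ ε * m := by
  intro r hr
  obtain ⟨κ, hκ, hlip, hfib⟩ := hf
  have hκ₀ : (0 : ℝ) < κ := by exact_mod_cast hκ
  obtain ⟨𝒱, h𝒱, g, hg, C₁, hC₁, hgrow⟩ := hdim (κ * (1 + r)) (mul_pos hκ₀ (by linarith))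
  have hC : 0 ≤ C := by simpa using hdist a
  have hsublin :
      (fun ρ => (κ : ℝ) * (C₁ * g (C₁ * (C * Real.log (1 + ρ) + C)) + C₁)) =o[atTop] id := by
    have hlog := (hg.isLittleO_comp_log (c := C₁ * C) (by positivity)).congr_left fun ρ =>
      congrArg g (by ring :
        C₁ * C * Real.log (1 + ρ) + C₁ * C = C₁ * (C * Real.log (1 + ρ) + C))
    exact ((hlog.const_mul_left C₁).add (isLittleO_const_id_atTop C₁)).const_mul_left κ
  refine ⟨chainPieces f r 𝒱, h𝒱.chainPieces hκ₀ hlip,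
    radiallySublinear_of_isLittleO hr ?_ hsublin ?_⟩
  · rintro W hW
    obtain ⟨i, U, -, u, -, rfl⟩ := mem_iUnion.1 hW
    exact ⟨_, _, rfl⟩
  · rintro W hW ρ hρ t ht
    obtain ⟨i, U, hU, u, hu, rfl⟩ := mem_iUnion.1 hW
    exact hY.card_le_of_subset_preimage_inter_closedBall hfib hdist
      (hgrow U (mem_iUnion.2 ⟨i, hU⟩) (f a)) hρ
      (ht.trans (inter_subset_inter_left _ (chainComp_subset (S := f ⁻¹' U) hu)))

/-- If `asdim_se(X) ≤ d` and there is a regular map `f : Y → X` which is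
exponentially distorted with respect to a basepoint `a ∈ Y`, then for every `r > 0` there is
a decomposition of `Y` into `d+1` colours of `r`-separated pieces whose collection of pieces
is radially sublinear with respect to `a`. -/
theorem radially_sublinear_decomposition_of_exp_distorted
    (X Y : Type*) [MetricSpace X] [MetricSpace Y]
    (hX : UnifDiscrete X) (hY : UnifDiscrete Y)
    (hXb : BddGeom X) (hYb : BddGeom Y)
    (d : ℕ) (hdim : AsdimLE seFamily X d)
    (f : Y → X) (hf : IsRegularMap f) (C : ℝ) (a : Y)
    (hdist : ∀ b : Y, dist (f a) (f b) ≤ C * Real.log (1 + dist a b) + C) :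
    ∀ r : ℝ, 0 < r → ∃ 𝒰 : Fin (d + 1) → Set (Set Y), Decomp d r 𝒰 ∧
      ∀ ε : ℝ, 0 < ε → ∃ M : ℝ, ∀ m : ℝ, M ≤ m →
        ∀ U ∈ ⋃ i, 𝒰 i, (∃ u ∈ U, dist a u ≤ m) →
          ∀ x ∈ U, ∀ y ∈ U, dist x y ≤ ε * m :=
  radially_sublinear_decomposition_of_exp_distorted_general X Y hY d hdim f hf C a hdist
end

section
/- Let F be a family of non-decreasing functions [0,∞) → [0,∞), let X and Y be 1-uniformly discrete metric spaces, and let f : X → Y be a Lipschitz map such that for every R > 0 and every r > 0 there exists an F-growing collection 𝒲 of subsets of X with the property that for every subset A ⊆ Y with diam(A) ≤ R, the preimage f⁻¹(A) is a disjoint union of members of 𝒲 any two of which are at distance ≥ r. Then ov-asdim_F(X) ≤ asdim(Y). -/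
open Metric Set

/-! Take an asymptotic-dimension decomposition of `Y` at scale `L·r` (with `L ≥ 1`) whose pieces
have diameter `≤ B`, and cut each preimage `f⁻¹(A)` of a piece into its `r`-chain components; by the
Lipschitz bound these are `r`-separated within each colour. A point of the `m`-th iterated
`s`-neighbourhood of such a component maps within `B + m·(L·s + B)` of the image of a base point, so
the neighbourhood lies in the preimage of a ball of fixed radius. The fibering hypothesis splits that
preimage into `(r + s)`-separated members of one `F`-growing family, and neither an `r`-chain nor an
`s`-step of the iteration can pass from one member to another: the whole iterated neighbourhood lies
in a single member, which bounds its growth. -/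

section ChainComponents

variable {X : Type*} [MetricSpace X]

def chainRel (S : Set X) (r : ℝ) (a b : X) : Prop :=
  a ∈ S ∧ b ∈ S ∧ dist a b < r

instance (S : Set X) (r : ℝ) : Std.Symm (chainRel S r) :=
  ⟨fun _ _ ⟨ha, hb, hab⟩ => ⟨hb, ha, by rwa [dist_comm]⟩⟩

def chainComponent (S : Set X) (r : ℝ) (x : X) : Set X :=
  {y | Relation.ReflTransGen (chainRel S r) x y}

variable {S : Set X} {r : ℝ} {x y : X}

theorem mem_chainComponent_self : x ∈ chainComponent S r x :=
  Relation.ReflTransGen.refl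

theorem chainComponent_subset (hx : x ∈ S) : chainComponent S r x ⊆ S := by
  intro z hz
  induction hz with
  | refl => exact hx
  | tail _ hbc => exact hbc.2.1

theorem chainComponent_eq (h : Relation.ReflTransGen (chainRel S r) x y) :
    chainComponent S r x = chainComponent S r y :=
  Set.ext fun _ => ⟨fun hz => (Std.Symm.symm _ _ h).trans hz, fun hz => h.trans hz⟩

theorem chainComponent_eq_of_dist_lt {x' p q : X} (hp : p ∈ chainComponent S r x)
    (hq : q ∈ chainComponent S r x') (hpS : p ∈ S) (hqS : q ∈ S) (hpq : dist p q < r) :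
    chainComponent S r x = chainComponent S r x' :=
  chainComponent_eq <| (Relation.ReflTransGen.tail hp ⟨hpS, hqS, hpq⟩).trans (Std.Symm.symm _ _ hq)

theorem SepFamily.mem_of_dist_lt {t : ℝ} {𝒞 : Set (Set X)} {U : Set X} {a b : X}
    (h : SepFamily t 𝒞) (hU : U ∈ 𝒞) (ha : a ∈ U) (hb : b ∈ ⋃₀ 𝒞) (hab : dist a b < t) :
    b ∈ U := by
  obtain ⟨V, hV, hbV⟩ := hb
  rcases eq_or_ne U V with rfl | hUV
  · exact hbV
  · exact absurd (h U hU V hV hUV a ha b hbV) hab.not_ge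

/-- A chain with steps shorter than `t` cannot jump between members of a `t`-separated family. -/
theorem chainComponent_subset_of_sepFamily {t : ℝ} {𝒞 : Set (Set X)} {U : Set X} {a : X}
    (h : SepFamily t 𝒞) (hrt : r ≤ t) (hcov : chainComponent S r x ⊆ ⋃₀ 𝒞) (hU : U ∈ 𝒞)
    (ha : a ∈ chainComponent S r x) (haU : a ∈ U) : chainComponent S r x ⊆ U := by
  rw [chainComponent_eq ha] at hcov ⊢
  intro z hz
  induction hz with
  | refl => exact haU
  | tail hab hbc ih => exact h.mem_of_dist_lt hU ih (hcov (hab.tail hbc)) (hbc.2.2.trans_le hrt)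

end ChainComponents

section IteratedNeighbourhoods

variable {X : Type*} [MetricSpace X] {𝒴 : Set (Set X)} {s : ℝ} {T₀ : Set X}

theorem mem_iterNbhd_succ {m : ℕ} {z : X} :
    z ∈ iterNbhd 𝒴 s (m + 1) T₀ ↔
      ∃ T ∈ 𝒴, z ∈ T ∧ ∃ a ∈ T, ∃ w ∈ iterNbhd 𝒴 s m T₀, dist a w ≤ s := by
  simp only [iterNbhd, mem_sUnion, mem_ofPred_eq]
  constructor
  · rintro ⟨T, ⟨hT, haw⟩, hz⟩
    exact ⟨T, hT, hz, haw⟩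
  · rintro ⟨T, hT, hz, haw⟩
    exact ⟨T, ⟨hT, haw⟩, hz⟩

theorem dist_image_le_of_mem_iterNbhd {Y : Type*} [MetricSpace Y] {f : X → Y} {K B : ℝ}
    (hK : 0 ≤ K) (hf : ∀ x x', dist (f x) (f x') ≤ K * dist x x')
    (h𝒴 : ∀ T ∈ 𝒴, ∀ a ∈ T, ∀ b ∈ T, dist (f a) (f b) ≤ B) (hT₀ : T₀ ∈ 𝒴) {x₀ : X}
    (hx₀ : x₀ ∈ T₀) :
    ∀ (m : ℕ), ∀ z ∈ iterNbhd 𝒴 s m T₀, dist (f z) (f x₀) ≤ B + m * (K * s + B) := by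
  intro m
  induction m with
  | zero => intro z hz; simpa using h𝒴 T₀ hT₀ z hz x₀ hx₀
  | succ m ih =>
    intro z hz
    obtain ⟨T, hT, hzT, a, haT, w, hw, haw⟩ := mem_iterNbhd_succ.1 hz
    have hfaw : dist (f a) (f w) ≤ K * s :=
      (hf a w).trans (mul_le_mul_of_nonneg_left haw hK)
    calc dist (f z) (f x₀) ≤ dist (f z) (f a) + dist (f a) (f w) + dist (f w) (f x₀) :=
          dist_triangle4 _ _ _ _
      _ ≤ B + K * s + (B + m * (K * s + B)) := by
          gcongr
          exacts [h𝒴 T hT z hzT a haT, ih w hw]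
      _ = B + ↑(m + 1) * (K * s + B) := by push_cast; ring

theorem iterNbhd_subset_of_sepFamily {r t : ℝ} {𝒞 : Set (Set X)} {U : Set X}
    (hsep : SepFamily t 𝒞) (hrt : r ≤ t) (hst : s < t)
    (h𝒴 : ∀ T ∈ 𝒴, ∃ S x, T = chainComponent S r x) (hU : U ∈ 𝒞) (hT₀U : T₀ ⊆ U) :
    ∀ (m : ℕ), (∀ k ≤ m, iterNbhd 𝒴 s k T₀ ⊆ ⋃₀ 𝒞) → iterNbhd 𝒴 s m T₀ ⊆ U := by
  intro m
  induction m with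
  | zero => exact fun _ => hT₀U
  | succ m ih =>
    intro hcov z hz
    obtain ⟨T, hT, hzT, a, haT, w, hw, haw⟩ := mem_iterNbhd_succ.1 hz
    have hTcov : T ⊆ ⋃₀ 𝒞 := fun u hu =>
      hcov (m + 1) le_rfl (mem_iterNbhd_succ.2 ⟨T, hT, hu, a, haT, w, hw, haw⟩)
    have hwU : w ∈ U := ih (fun k hk => hcov k (hk.trans m.le_succ)) hw
    have haU : a ∈ U :=
      hsep.mem_of_dist_lt hU hwU (hTcov haT) (by rw [dist_comm]; exact haw.trans_lt hst)
    obtain ⟨S, x, rfl⟩ := h𝒴 T hT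
    exact chainComponent_subset_of_sepFamily hsep hrt hTcov hU haT haU hzT

end IteratedNeighbourhoods

section Fibering

variable {X Y : Type*} [MetricSpace X]

def fiberComponents (f : X → Y) (𝒜 : Set (Set Y)) (r : ℝ) : Set (Set X) :=
  {T | ∃ A ∈ 𝒜, ∃ x ∈ f ⁻¹' A, T = chainComponent (f ⁻¹' A) r x}

theorem iUnion_fiberComponents {f : X → Y} {r : ℝ} {ι : Type*} (𝒜 : ι → Set (Set Y)) :
    ⋃ i, fiberComponents f (𝒜 i) r = fiberComponents f (⋃ i, 𝒜 i) r := by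
  ext T
  simp only [fiberComponents, mem_iUnion, mem_ofPred_eq]
  constructor
  · rintro ⟨i, A, hA, hT⟩
    exact ⟨A, ⟨i, hA⟩, hT⟩
  · rintro ⟨A, ⟨i, hA⟩, hT⟩
    exact ⟨i, A, hA, hT⟩

variable [MetricSpace Y]

def FGrowingFibers (F : Set (ℝ → ℝ)) (f : X → Y) : Prop :=
  ∀ R : ℝ, 0 < R → ∀ r : ℝ, 0 < r → ∃ 𝒲 : Set (Set X), FGrowing F 𝒲 ∧
    ∀ A : Set Y, (∀ a ∈ A, ∀ b ∈ A, dist a b ≤ R) →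
      ∃ 𝒞 ⊆ 𝒲, f ⁻¹' A = ⋃₀ 𝒞 ∧ SepFamily r 𝒞

variable {f : X → Y} {K r : ℝ}

theorem sepFamily_fiberComponents (hK : 0 < K) (hf : ∀ x x', dist (f x) (f x') ≤ K * dist x x')
    {𝒜 : Set (Set Y)} (h𝒜 : SepFamily (K * r) 𝒜) : SepFamily r (fiberComponents f 𝒜 r) := by
  rintro _ ⟨A₁, hA₁, x₁, hx₁, rfl⟩ _ ⟨A₂, hA₂, x₂, hx₂, rfl⟩ hne p hp q hq
  by_contra! hpq
  have hpA₁ : f p ∈ A₁ := chainComponent_subset hx₁ hp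
  have hqA₂ : f q ∈ A₂ := chainComponent_subset hx₂ hq
  rcases eq_or_ne A₁ A₂ with rfl | hA
  · exact hne (chainComponent_eq_of_dist_lt hp hq hpA₁ hqA₂ hpq)
  · have := h𝒜 A₁ hA₁ A₂ hA₂ hA (f p) hpA₁ (f q) hqA₂
    nlinarith [hf p q]

theorem decomp_fiberComponents {n : ℕ} (hK : 0 < K)
    (hf : ∀ x x', dist (f x) (f x') ≤ K * dist x x') {𝒱 : Fin (n + 1) → Set (Set Y)}
    (h𝒱 : Decomp n (K * r) 𝒱) : Decomp n r (fun i => fiberComponents f (𝒱 i) r) := by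
  refine ⟨fun x => ?_, fun i => sepFamily_fiberComponents hK hf (h𝒱.2 i)⟩
  obtain ⟨i, A, hA, hxA⟩ := h𝒱.1 (f x)
  exact ⟨i, _, ⟨A, hA, x, hxA, rfl⟩, mem_chainComponent_self⟩

theorem fGrowing_iterNbhd_fiberComponents {F : Set (ℝ → ℝ)} (hfib : FGrowingFibers F f)
    (hK : 0 ≤ K) (hf : ∀ x x', dist (f x) (f x') ≤ K * dist x x') {𝒜 : Set (Set Y)} {B : ℝ}
    (hB : 0 ≤ B) (h𝒜 : ∀ A ∈ 𝒜, ∀ a ∈ A, ∀ b ∈ A, dist a b ≤ B) (hr : 0 < r) {s : ℝ}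
    (hs : 0 ≤ s) (m : ℕ) :
    FGrowing F (iterNbhd (fiberComponents f 𝒜 r) s m '' fiberComponents f 𝒜 r) := by
  set D := B + m * (K * s + B)
  have hD : 0 ≤ D := by positivity
  obtain ⟨𝒲, ⟨g, hg, C, hC, hgrowth⟩, hdec⟩ := hfib (2 * D + 1) (by linarith) (r + s) (by linarith)
  refine ⟨g, hg, C, hC, ?_⟩
  rintro _ ⟨T₀, hT₀, rfl⟩ x ρ hρ P hP
  obtain ⟨A, hA, x₀, hx₀, rfl⟩ := hT₀
  have hball : ∀ a ∈ closedBall (f x₀) D, ∀ b ∈ closedBall (f x₀) D, dist a b ≤ 2 * D + 1 :=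
    fun a ha b hb => by
      linarith [dist_triangle_right a b (f x₀), mem_closedBall.1 ha, mem_closedBall.1 hb]
  obtain ⟨𝒞, h𝒞𝒲, hpre, hsep⟩ := hdec _ hball
  have hfibers : ∀ T ∈ fiberComponents f 𝒜 r, ∀ a ∈ T, ∀ b ∈ T, dist (f a) (f b) ≤ B := by
    rintro _ ⟨A', hA', x', hx', rfl⟩ a ha b hb
    exact h𝒜 A' hA' _ (chainComponent_subset hx' ha) _ (chainComponent_subset hx' hb)
  have hcov : ∀ k ≤ m, iterNbhd (fiberComponents f 𝒜 r) s k (chainComponent (f ⁻¹' A) r x₀) ⊆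
      ⋃₀ 𝒞 := by
    intro k hk z hz
    rw [← hpre, mem_preimage, mem_closedBall]
    refine (dist_image_le_of_mem_iterNbhd hK hf hfibers ⟨A, hA, x₀, hx₀, rfl⟩
      mem_chainComponent_self k z hz).trans ?_
    show _ ≤ B + m * (K * s + B)
    gcongr
  obtain ⟨U, hU, hx₀U⟩ := hcov 0 m.zero_le mem_chainComponent_self
  have hT₀U := chainComponent_subset_of_sepFamily hsep (by linarith) (hcov 0 m.zero_le) hU
    mem_chainComponent_self hx₀U
  have hchains : ∀ T ∈ fiberComponents f 𝒜 r, ∃ S x, T = chainComponent S r x :=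
    fun _ ⟨_, _, x', _, hT⟩ => ⟨_, x', hT⟩
  have hsub := iterNbhd_subset_of_sepFamily hsep (by linarith) (by linarith) hchains hU hT₀U m hcov
  exact hgrowth U (h𝒞𝒲 hU) x ρ hρ P (hP.trans (inter_subset_inter_left _ hsub))

end Fibering

theorem ov_asdim_le_of_fibering_general
    (F : Set (ℝ → ℝ))
    (X Y : Type*) [MetricSpace X] [MetricSpace Y]
    (f : X → Y) (L : ℝ)
    (hf : ∀ x x' : X, dist (f x) (f x') ≤ L * dist x x')
    (hfib : ∀ R : ℝ, 0 < R → ∀ r : ℝ, 0 < r → ∃ 𝒲 : Set (Set X), FGrowing F 𝒲 ∧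
      ∀ A : Set Y, (∀ a ∈ A, ∀ b ∈ A, dist a b ≤ R) →
        ∃ 𝒞 ⊆ 𝒲, f ⁻¹' A = ⋃₀ 𝒞 ∧ SepFamily r 𝒞)
    (n : ℕ) (hYdim : ClassicalAsdimLE Y n) :
    OvAsdimLE F X n := by
  intro r hr
  set K := max L 1
  have hK : 0 < K := one_pos.trans_le (le_max_right _ _)
  have hfK : ∀ x x', dist (f x) (f x') ≤ K * dist x x' := fun x x' =>
    (hf x x').trans (mul_le_mul_of_nonneg_right (le_max_left _ _) dist_nonneg)
  obtain ⟨𝒱, h𝒱, B, hB⟩ := hYdim (K * r) (by positivity)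
  refine ⟨fun i => fiberComponents f (𝒱 i) r, decomp_fiberComponents hK hfK h𝒱, fun s hs m => ?_⟩
  rw [iUnion_fiberComponents]
  exact fGrowing_iterNbhd_fiberComponents hfib hK.le hfK (le_max_right B 0)
    (fun A hA a ha b hb => (hB A hA a ha b hb).trans (le_max_left B 0)) hr (by linarith) m

/-- **fibering property.** If `f : X → Y` is Lipschitz and preimages of
uniformly bounded subsets of `Y` decompose in an `F`-controlled way, then
`ov-asdim_F(X) ≤ asdim(Y)`. -/
theorem ov_asdim_le_of_fibering
    (F : Set (ℝ → ℝ)) (hF : NondecrFamily F)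
    (X Y : Type*) [MetricSpace X] [MetricSpace Y]
    (hX : UnifDiscrete X) (hY : UnifDiscrete Y)
    (f : X → Y) (L : ℝ) (hL : 0 ≤ L)
    (hf : ∀ x x' : X, dist (f x) (f x') ≤ L * dist x x')
    (hfib : ∀ R : ℝ, 0 < R → ∀ r : ℝ, 0 < r → ∃ 𝒲 : Set (Set X), FGrowing F 𝒲 ∧
      ∀ A : Set Y, (∀ a ∈ A, ∀ b ∈ A, dist a b ≤ R) →
        ∃ 𝒞 ⊆ 𝒲, f ⁻¹' A = ⋃₀ 𝒞 ∧ SepFamily r 𝒞)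
    (n : ℕ) (hYdim : ClassicalAsdimLE Y n) :
    OvAsdimLE F X n :=
  ov_asdim_le_of_fibering_general F X Y f L hf hfib n hYdim
end
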